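/- arXiv:2205.03744 — 2 statements merged into one kernel-verified Lean document; each statement's English description precedes it below -/
import Mathlib

section
/- Let h : ℝ → ℝ be twice differentiable and p₁, p₂ > 0. Define v₀ = h and v₁ = v̇₀ + p₁v₀. If v̇₁(t) + p₂v₁(t) ≥ 0 for all t ≥ 0, v₀(0) ≥ 0, and v₁(0) ≥ 0, then h(t) ≥ 0 for all t ≥ 0. -/
/-! Each constraint `v̇ᵢ + pᵢ₊₁ vᵢ ≥ 0` says that the integrating factor `exp (pᵢ₊₁ t) vᵢ t` is
nondecreasing on `t ≥ 0`, so `vᵢ` keeps the sign of `vᵢ 0`. Applied first to `v₁`, this turns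
`v₁ ≥ 0` into the first-order constraint on `v₀ = h`, and applying it once more gives `h ≥ 0`. -/

open Real Set

theorem monotoneOn_exp_mul_of_deriv_add_mul_nonneg {f : ℝ → ℝ} (hf : Differentiable ℝ f) {p : ℝ}
    (hc : ∀ t ≥ (0 : ℝ), deriv f t + p * f t ≥ 0) :
    MonotoneOn (fun t => exp (p * t) * f t) (Ici 0) := by
  have hderiv (t : ℝ) :
      HasDerivAt (fun t => exp (p * t) * f t) (exp (p * t) * (deriv f t + p * f t)) t := by
    have hexp : HasDerivAt (fun t => exp (p * t)) (exp (p * t) * p) t :=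
      ((hasDerivAt_id' t).const_mul p).exp.congr_deriv (by ring)
    exact (hexp.mul (hf t).hasDerivAt).congr_deriv (by ring)
  refine monotoneOn_of_hasDerivWithinAt_nonneg (convex_Ici 0)
    (fun t _ => (hderiv t).continuousAt.continuousWithinAt)
    (fun t _ => (hderiv t).hasDerivWithinAt) fun t ht => ?_
  rw [interior_Ici] at ht
  exact mul_nonneg (exp_pos _).le (hc t (le_of_lt ht))

theorem nonneg_of_deriv_add_mul_nonneg {f : ℝ → ℝ} (hf : Differentiable ℝ f) {p : ℝ}
    (hc : ∀ t ≥ (0 : ℝ), deriv f t + p * f t ≥ 0) (h0 : f 0 ≥ 0) :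
    ∀ t ≥ (0 : ℝ), f t ≥ 0 := by
  intro t ht
  have hmono := monotoneOn_exp_mul_of_deriv_add_mul_nonneg hf hc
    self_mem_Ici (mem_Ici.mpr ht) ht
  simp only [mul_zero, exp_zero, one_mul] at hmono
  exact nonneg_of_mul_nonneg_right (h0.trans hmono) (exp_pos _)

theorem stmt5_general (h : ℝ → ℝ) (hdiff : ContDiff ℝ 2 h) (p₁ p₂ : ℝ)
    (v₀ : ℝ → ℝ) (hv₀ : v₀ = h)
    (v₁ : ℝ → ℝ) (hv₁ : v₁ = fun t => deriv v₀ t + p₁ * v₀ t)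
    (hcond : ∀ t ≥ (0:ℝ), deriv v₁ t + p₂ * v₁ t ≥ 0)
    (h0 : v₀ 0 ≥ 0) (h1 : v₁ 0 ≥ 0) :
    ∀ t ≥ (0:ℝ), h t ≥ 0 := by
  subst hv₀
  have hdiff₀ : Differentiable ℝ v₀ := hdiff.differentiable two_ne_zero
  have hdiff₁ : Differentiable ℝ v₁ := hv₁ ▸ hdiff.differentiable_deriv_two.add (hdiff₀.const_mul p₁)
  have hv₁_nonneg := nonneg_of_deriv_add_mul_nonneg hdiff₁ hcond h1
  exact nonneg_of_deriv_add_mul_nonneg hdiff₀ (fun t ht => hv₁ ▸ hv₁_nonneg t ht) h0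

theorem stmt5 (h : ℝ → ℝ) (hdiff : ContDiff ℝ 2 h) (p₁ p₂ : ℝ) (hp₁ : 0 < p₁) (hp₂ : 0 < p₂)
    (v₀ : ℝ → ℝ) (hv₀ : v₀ = h)
    (v₁ : ℝ → ℝ) (hv₁ : v₁ = fun t => deriv v₀ t + p₁ * v₀ t)
    (hcond : ∀ t ≥ (0:ℝ), deriv v₁ t + p₂ * v₁ t ≥ 0)
    (h0 : v₀ 0 ≥ 0) (h1 : v₁ 0 ≥ 0) :
    ∀ t ≥ (0:ℝ), h t ≥ 0 :=
  stmt5_general h hdiff p₁ p₂ v₀ hv₀ v₁ hv₁ hcond h0 h1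
end

section
/- Let h : ℝ → ℝ be r-times differentiable, p₁,…,p_r > 0, and recursively define v₀ = h and v_i = v̇_{i−1} + p_i v_{i−1} for 1 ≤ i ≤ r. If v_r(t) ≥ 0 for all t ≥ 0 and v_i(0) ≥ 0 for all 0 ≤ i ≤ r−1, then h(t) ≥ 0 for all t ≥ 0. -/
/-!
Multiplying by the integrating factor `exp (c t)` turns `f' + c f ≥ 0` into monotonicity of
`exp (c t) f t`, so `f a ≥ 0` propagates to all `t ≥ a`. Applied with `f = v i`, `c = p (i+1)`,
this passes nonnegativity down the cascade from `v r` to `v 0 = h`.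
-/

open Real Set

theorem nonneg_of_deriv_add_const_mul_nonneg {f : ℝ → ℝ} {a c : ℝ} (hf : Differentiable ℝ f)
    (ha : 0 ≤ f a) (hd : ∀ t ≥ a, 0 ≤ deriv f t + c * f t) : ∀ t ≥ a, 0 ≤ f t := by
  set g : ℝ → ℝ := fun t => exp (c * t) * f t
  have hg : ∀ x, HasDerivAt g (exp (c * x) * (deriv f x + c * f x)) x := by
    intro x
    have hexp : HasDerivAt (fun t => exp (c * t)) (exp (c * x) * c) x := by
      simpa using ((hasDerivAt_id x).const_mul c).exp
    exact (hexp.mul (hf x).hasDerivAt).congr_deriv (by ring)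
  have hmono : MonotoneOn g (Ici a) := by
    refine monotoneOn_of_deriv_nonneg (convex_Ici a)
      (fun x _ => (hg x).continuousAt.continuousWithinAt)
      (fun x _ => (hg x).differentiableAt.differentiableWithinAt) fun x hx => ?_
    rw [interior_Ici] at hx
    rw [(hg x).deriv]
    exact mul_nonneg (exp_pos _).le (hd x (le_of_lt hx))
  intro t ht
  have hgt : g a ≤ g t := hmono self_mem_Ici ht ht
  have hgt_nonneg : 0 ≤ exp (c * t) * f t := (mul_nonneg (exp_pos _).le ha).trans hgt
  exact nonneg_of_mul_nonneg_right hgt_nonneg (exp_pos _)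

theorem ContDiff.deriv_add_const_mul {𝕜 : Type*} [NontriviallyNormedField 𝕜] {f : 𝕜 → 𝕜}
    {n : WithTop ℕ∞} (hf : ContDiff 𝕜 (n + 1) f) (c : 𝕜) :
    ContDiff 𝕜 n fun t => deriv f t + c * f t :=
  (contDiff_succ_iff_deriv.mp hf).2.2.add (contDiff_const.mul (hf.of_le le_self_add))

section Cascade

variable {v : ℕ → ℝ → ℝ} {c : ℕ → ℝ} {r : ℕ}

theorem contDiff_cascade (hv : ∀ i < r, v (i + 1) = fun t => deriv (v i) t + c i * v i t)
    (h0 : ContDiff ℝ r (v 0)) : ∀ i ≤ r, ContDiff ℝ (r - i : ℕ) (v i) := by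
  intro i
  induction i with
  | zero => simpa using h0
  | succ i ih =>
    intro hi
    have hvi : ContDiff ℝ ((r - (i + 1) : ℕ) + 1 : ℕ) (v i) := by
      rw [show r - (i + 1) + 1 = r - i by omega]
      exact ih (by omega)
    rw [hv i hi]
    exact ContDiff.deriv_add_const_mul (by exact_mod_cast hvi) (c i)

theorem nonneg_of_cascade {a : ℝ} (hv : ∀ i < r, v (i + 1) = fun t => deriv (v i) t + c i * v i t)
    (hdiff : ∀ i < r, Differentiable ℝ (v i)) (hinit : ∀ i < r, 0 ≤ v i a)
    (hlast : ∀ t ≥ a, 0 ≤ v r t) : ∀ t ≥ a, 0 ≤ v 0 t := by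
  refine Nat.decreasingInduction (motive := fun i _ => ∀ t ≥ a, 0 ≤ v i t)
    (fun i hi ih => ?_) hlast (Nat.zero_le r)
  refine nonneg_of_deriv_add_const_mul_nonneg (c := c i) (hdiff i hi) (hinit i hi) fun t ht => ?_
  simpa only [hv i hi] using ih t ht

end Cascade

theorem stmt6_general (r : ℕ) (h : ℝ → ℝ) (hdiff : ContDiff ℝ (r : ℕ∞) h)
    (p : ℕ → ℝ)
    (v : ℕ → ℝ → ℝ) (hv0 : v 0 = h)
    (hvi : ∀ i, 1 ≤ i → i ≤ r → v i = fun t => deriv (v (i - 1)) t + p i * v (i - 1) t)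
    (hcond : ∀ t ≥ (0:ℝ), v r t ≥ 0)
    (hinit : ∀ i ≤ r - 1, v i 0 ≥ 0) :
    ∀ t ≥ (0:ℝ), h t ≥ 0 := by
  have hv : ∀ i < r, v (i + 1) = fun t => deriv (v i) t + p (i + 1) * v i t :=
    fun i hi => hvi (i + 1) (by omega) hi
  have hsmooth := contDiff_cascade hv (by simpa [hv0] using hdiff)
  have hdiff' : ∀ i < r, Differentiable ℝ (v i) := fun i hi =>
    (hsmooth i hi.le).differentiable (by simpa using Nat.sub_ne_zero_of_lt hi)
  rw [← hv0]
  exact nonneg_of_cascade hv hdiff' (fun i hi => hinit i (by omega)) hcond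

theorem stmt6 (r : ℕ) (hr : 1 ≤ r) (h : ℝ → ℝ) (hdiff : ContDiff ℝ (r : ℕ∞) h)
    (p : ℕ → ℝ) (hp : ∀ i, 1 ≤ i → i ≤ r → 0 < p i)
    (v : ℕ → ℝ → ℝ) (hv0 : v 0 = h)
    (hvi : ∀ i, 1 ≤ i → i ≤ r → v i = fun t => deriv (v (i - 1)) t + p i * v (i - 1) t)
    (hcond : ∀ t ≥ (0:ℝ), v r t ≥ 0)
    (hinit : ∀ i ≤ r - 1, v i 0 ≥ 0) :
    ∀ t ≥ (0:ℝ), h t ≥ 0 :=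
  stmt6_general r h hdiff p v hv0 hvi hcond hinit
end
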